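/- Let f be submodular, S ⊆ N, and Y ⊆ N \ S a set with associated costs c_u ≥ 1 such that Σ_{u ∈ Y} c_u < b and f(S ∪ {u}) − f(S) < (2τ/b)·c_u for every u ∈ Y. Then f(S ∪ Y) − f(S) < 2τ. -/

import Mathlib

open Finset

section Submodular

variable {α : Type*} [DecidableEq α] (f : Finset α → ℝ)

theorem marginal_insert_union_le_marginal_insert
    (hsub : ∀ A B : Finset α, f A + f B ≥ f (A ∪ B) + f (A ∩ B))
    {S Y : Finset α} {a : α} (ha : a ∉ Y) :
    f (insert a (S ∪ Y)) - f (S ∪ Y) ≤ f (insert a S) - f S := by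
  have hunion : (S ∪ Y) ∪ insert a S = insert a (S ∪ Y) := by
    ext x; simp only [mem_union, mem_insert]; tauto
  have hinter : (S ∪ Y) ∩ insert a S = S := by
    ext x; simp only [mem_inter, mem_union, mem_insert]
    constructor
    · rintro ⟨hS | hY, rfl | hS'⟩ <;> first | assumption | exact absurd hY ha
    · exact fun hS => ⟨Or.inl hS, Or.inr hS⟩
  have := hsub (S ∪ Y) (insert a S)
  rw [hunion, hinter] at this
  linarith

theorem sub_le_sum_marginal_insert
    (hsub : ∀ A B : Finset α, f A + f B ≥ f (A ∪ B) + f (A ∩ B)) (S Y : Finset α) :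
    f (S ∪ Y) - f S ≤ ∑ u ∈ Y, (f (insert u S) - f S) := by
  induction Y using Finset.induction_on with
  | empty => simp
  | insert a Y ha ih =>
    rw [sum_insert ha, union_insert]
    linarith [marginal_insert_union_le_marginal_insert f hsub (S := S) ha]

end Submodular

theorem density_threshold_marginal_bound_general
    {α : Type*} [DecidableEq α] (f : Finset α → ℝ)
    (hsub : ∀ A B : Finset α, f A + f B ≥ f (A ∪ B) + f (A ∩ B))
    (τ b : ℝ) (hτ : τ > 0) (hb : b > 0)
    (S Y : Finset α)
    (c : α → ℝ)
    (hcost : ∑ u ∈ Y, c u < b)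
    (hrej : ∀ u ∈ Y, f (insert u S) - f S < (2 * τ / b) * c u) :
    f (S ∪ Y) - f S < 2 * τ := by
  have hrate : 0 < 2 * τ / b := by positivity
  calc f (S ∪ Y) - f S ≤ ∑ u ∈ Y, (f (insert u S) - f S) := sub_le_sum_marginal_insert f hsub S Y
    _ ≤ ∑ u ∈ Y, (2 * τ / b) * c u := sum_le_sum fun u hu => (hrej u hu).le
    _ = (2 * τ / b) * ∑ u ∈ Y, c u := (mul_sum ..).symm
    _ < (2 * τ / b) * b := mul_lt_mul_of_pos_left hcost hrate
    _ = 2 * τ := div_mul_cancel₀ _ hb.ne'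

/-- If every `u ∈ Y` (disjoint from `S`) has marginal value below `(2τ/b)·c_u`
and `∑_{u ∈ Y} c_u < b`, then `f(S ∪ Y) − f(S) < 2τ`. -/
theorem density_threshold_marginal_bound
    {α : Type*} [DecidableEq α] [Fintype α] (f : Finset α → ℝ)
    (hsub : ∀ A B : Finset α, f A + f B ≥ f (A ∪ B) + f (A ∩ B))
    (τ b : ℝ) (hτ : τ > 0) (hb : b > 0)
    (S Y : Finset α) (hYS : Disjoint Y S)
    (c : α → ℝ) (hc : ∀ u ∈ Y, c u ≥ 1)
    (hcost : ∑ u ∈ Y, c u < b)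
    (hrej : ∀ u ∈ Y, f (insert u S) - f S < (2 * τ / b) * c u) :
    f (S ∪ Y) - f S < 2 * τ :=
  density_threshold_marginal_bound_general f hsub τ b hτ hb S Y c hcost hrej
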